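/- (Interpolation invariance of the embedding contour integral.) Let p be a positive integer and α ∈ ℝ. Let R ⊂ ℂ be a closed axis-parallel rectangle with positively oriented boundary γ, let θ be in the interior of R with Λ(θ,α) ≠ 0, and suppose Λ(z,α) ≠ 0 and z ≠ θ for all z ∈ γ. Let f, g be holomorphic on an open set containing R and suppose: f(θ) = g(θ); for every zero χ of Λ(·,α) in R, f(χ) = g(χ); and for every zero χ of Λ(·,α) in R with sin(p χ) = 0, additionally f′(χ) = g′(χ). Then ∮_γ f(z)/(Λ(z,α)(z − θ)) dz = ∮_γ g(z)/(Λ(z,α)(z − θ)) dz. -/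

import Mathlib

open Real

/-- `Λ(z,α) := cos(pz) - (-1)^p cos(pα)` for complex `z` and real `α`. -/
noncomputable def LamC (p : ℕ) (α : ℝ) (z : ℂ) : ℂ :=
  Complex.cos ((p : ℂ) * z) - (-1 : ℂ) ^ p * Complex.cos ((p : ℂ) * (α : ℂ))

/-- The closed axis-parallel rectangle `[a, a'] × [b, b'] ⊂ ℂ`. -/
def closedRect (a a' b b' : ℝ) : Set ℂ :=
  {z : ℂ | z.re ∈ Set.Icc a a' ∧ z.im ∈ Set.Icc b b'}

/-- The positively oriented boundary of the axis-parallel rectangle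
`[a, a'] × [b, b'] ⊂ ℂ`, as a set. -/
def rectBoundary (a a' b b' : ℝ) : Set ℂ :=
  {z : ℂ | z.re ∈ Set.Icc a a' ∧ z.im ∈ Set.Icc b b' ∧
    (z.re = a ∨ z.re = a' ∨ z.im = b ∨ z.im = b')}

/-- The contour integral of `f` along the positively oriented (anticlockwise) boundary of
the axis-parallel rectangle `[a, a'] × [b, b'] ⊂ ℂ`: the sum of the four oriented
edge integrals. -/
noncomputable def rectIntegral (a a' b b' : ℝ) (f : ℂ → ℂ) : ℂ :=
  ((∫ x : ℝ in a..a', f ((x : ℂ) + (b : ℂ) * Complex.I)) -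
    ∫ x : ℝ in a..a', f ((x : ℂ) + (b' : ℂ) * Complex.I)) +
  Complex.I * ((∫ y : ℝ in b..b', f ((a' : ℂ) + (y : ℂ) * Complex.I)) -
    ∫ y : ℝ in b..b', f ((a : ℂ) + (y : ℂ) * Complex.I))


open Filter Topology Set

/-! The difference of the two integrands, `(f - g) / (Λ(·, α) · (· - θ))`, has only removable
singularities in the rectangle. The denominator vanishes to order one at `θ` and at a zero `χ`
of `Λ` with `sin (p χ) ≠ 0`, and to order two when `sin (p χ) = 0` (then
`Λ''(χ) = -p² cos (p χ) = ±p²`); the interpolation conditions make `f - g` vanish to at least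
that order. Filling in these countably many points gives a function that is continuous on the
rectangle and holomorphic off a countable set, so its boundary integral vanishes by
Cauchy–Goursat. -/

theorem exists_tendsto_div_of_analyticOrderAt_le {𝕜 : Type*} [NontriviallyNormedField 𝕜]
    {h k : 𝕜 → 𝕜} {c : 𝕜} (hh : AnalyticAt 𝕜 h c) (hk : AnalyticAt 𝕜 k c)
    (hk_top : analyticOrderAt k c ≠ ⊤) (hle : analyticOrderAt k c ≤ analyticOrderAt h c) :
    ∃ L, Tendsto (h / k) (𝓝[≠] c) (𝓝 L) := by
  refine tendsto_nhds_of_meromorphicOrderAt_nonneg (hh.meromorphicAt.div hk.meromorphicAt) ?_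
  rw [meromorphicOrderAt_div hh.meromorphicAt hk.meromorphicAt, hh.meromorphicOrderAt_eq,
    hk.meromorphicOrderAt_eq]
  lift analyticOrderAt k c to ℕ using hk_top with n
  cases hm : analyticOrderAt h c with
  | top => simp
  | coe m =>
    have hnm : n ≤ m := by exact_mod_cast hm ▸ hle
    rw [ENat.map_natCast, ENat.map_natCast]
    exact_mod_cast (sub_nonneg.mpr (Int.ofNat_le.mpr hnm) : (0 : ℤ) ≤ m - n)

theorem hasDerivAt_lamC (p : ℕ) (α : ℝ) (z : ℂ) :
    HasDerivAt (LamC p α) (-(p * Complex.sin (p * z))) z := by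
  refine (((hasDerivAt_id z).const_mul (p : ℂ)).ccos.sub_const
    ((-1 : ℂ) ^ p * Complex.cos ((p : ℂ) * (α : ℂ)))).congr_deriv ?_
  simp [mul_comm]

theorem differentiable_lamC (p : ℕ) (α : ℝ) : Differentiable ℂ (LamC p α) :=
  fun z => (hasDerivAt_lamC p α z).differentiableAt

theorem deriv_lamC (p : ℕ) (α : ℝ) :
    deriv (LamC p α) = fun z => -(p * Complex.sin (p * z)) :=
  funext fun z => (hasDerivAt_lamC p α z).deriv

theorem analyticOrderAt_lamC_of_sin_ne_zero {p : ℕ} (hp : p ≠ 0) {α : ℝ} {c : ℂ}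
    (hc : LamC p α c = 0) (hs : Complex.sin (p * c) ≠ 0) :
    analyticOrderAt (LamC p α) c = 1 :=
  (differentiable_lamC p α).analyticAt c |>.analyticOrderAt_eq_one_of_zero_deriv_ne_zero hc <| by
    simpa [deriv_lamC] using ⟨hp, hs⟩

theorem analyticOrderAt_lamC_of_sin_eq_zero {p : ℕ} (hp : p ≠ 0) {α : ℝ} {c : ℂ}
    (hc : LamC p α c = 0) (hs : Complex.sin (p * c) = 0) :
    analyticOrderAt (LamC p α) c = 2 := by
  have hcos : Complex.cos (p * c) ≠ 0 := by
    intro h0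
    simpa [hs, h0] using Complex.sin_sq_add_cos_sq ((p : ℂ) * c)
  have hderiv : HasDerivAt (deriv (LamC p α)) (-(p * (Complex.cos (p * c) * p))) c := by
    rw [deriv_lamC]
    exact (((hasDerivAt_id c).const_mul (p : ℂ)).csin.const_mul (p : ℂ)).neg.congr_deriv
      (by simp)
  have hanalytic := (differentiable_lamC p α).analyticAt c
  rw [show (2 : ℕ∞) = (1 : ℕ) + 1 from rfl, analyticOrderAt_deriv_eq_iff hanalytic hc]
  refine hanalytic.deriv.analyticOrderAt_eq_one_of_zero_deriv_ne_zero
    (by simp [deriv_lamC, hs]) ?_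
  simp [hderiv.deriv, hp, hcos]

theorem countable_setOf_lamC_eq_zero {p : ℕ} (hp : p ≠ 0) (α : ℝ) :
    {z : ℂ | LamC p α z = 0}.Countable := by
  obtain ⟨w, hw⟩ := Complex.cos_surjective ((-1 : ℂ) ^ p * Complex.cos ((p : ℂ) * (α : ℂ)))
  refine ((countable_range fun k : ℤ => (w - 2 * k * π) / p).union
    (countable_range fun k : ℤ => (2 * k * π - w) / p)).mono fun z hz => ?_
  have hp' : (p : ℂ) ≠ 0 := Nat.cast_ne_zero.mpr hp
  obtain ⟨k, hk | hk⟩ := Complex.cos_eq_cos_iff.mp (sub_eq_zero.mp hz |>.trans hw.symm)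
  · exact .inl ⟨k, by rw [div_eq_iff hp']; linear_combination hk⟩
  · exact .inr ⟨k, by rw [div_eq_iff hp']; linear_combination -hk⟩

theorem countable_setOf_lamC_mul_sub_eq_zero {p : ℕ} (hp : p ≠ 0) (α : ℝ) (θ : ℂ) :
    {z : ℂ | LamC p α z * (z - θ) = 0}.Countable :=
  ((countable_setOf_lamC_eq_zero hp α).union (countable_singleton θ)).mono fun z hz => by
    simpa [sub_eq_zero, or_comm] using hz

section Rectangle

variable {a a' b b' : ℝ}

theorem ofReal_add_ofReal_mul_I_mem_rectBoundary {x y : ℝ} (hx : x ∈ Icc a a')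
    (hy : y ∈ Icc b b') (h : x = a ∨ x = a' ∨ y = b ∨ y = b') :
    (x : ℂ) + y * Complex.I ∈ rectBoundary a a' b b' := by
  simpa [rectBoundary] using ⟨hx, hy, h⟩

theorem mapsTo_bottom_edge_rectBoundary (hab : a ≤ a') (hbb : b ≤ b') :
    MapsTo (fun x : ℝ => (x : ℂ) + b * Complex.I) (uIcc a a') (rectBoundary a a' b b') :=
  fun x hx => ofReal_add_ofReal_mul_I_mem_rectBoundary (uIcc_of_le hab ▸ hx)
    (left_mem_Icc.mpr hbb) (by simp)

theorem mapsTo_top_edge_rectBoundary (hab : a ≤ a') (hbb : b ≤ b') :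
    MapsTo (fun x : ℝ => (x : ℂ) + b' * Complex.I) (uIcc a a') (rectBoundary a a' b b') :=
  fun x hx => ofReal_add_ofReal_mul_I_mem_rectBoundary (uIcc_of_le hab ▸ hx)
    (right_mem_Icc.mpr hbb) (by simp)

theorem mapsTo_right_edge_rectBoundary (hab : a ≤ a') (hbb : b ≤ b') :
    MapsTo (fun y : ℝ => (a' : ℂ) + y * Complex.I) (uIcc b b') (rectBoundary a a' b b') :=
  fun y hy => ofReal_add_ofReal_mul_I_mem_rectBoundary (right_mem_Icc.mpr hab)
    (uIcc_of_le hbb ▸ hy) (by simp)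

theorem mapsTo_left_edge_rectBoundary (hab : a ≤ a') (hbb : b ≤ b') :
    MapsTo (fun y : ℝ => (a : ℂ) + y * Complex.I) (uIcc b b') (rectBoundary a a' b b') :=
  fun y hy => ofReal_add_ofReal_mul_I_mem_rectBoundary (left_mem_Icc.mpr hab)
    (uIcc_of_le hbb ▸ hy) (by simp)

theorem rectIntegral_congr (hab : a ≤ a') (hbb : b ≤ b') {F G : ℂ → ℂ}
    (h : EqOn F G (rectBoundary a a' b b')) :
    rectIntegral a a' b b' F = rectIntegral a a' b b' G := by
  have hedge {s t : ℝ} {e : ℝ → ℂ} (hmaps : MapsTo e (uIcc s t) (rectBoundary a a' b b')) :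
      ∫ x in s..t, F (e x) = ∫ x in s..t, G (e x) :=
    intervalIntegral.integral_congr fun x hx => h (hmaps hx)
  simp only [rectIntegral]
  rw [hedge (mapsTo_bottom_edge_rectBoundary hab hbb),
    hedge (mapsTo_top_edge_rectBoundary hab hbb),
    hedge (mapsTo_right_edge_rectBoundary hab hbb),
    hedge (mapsTo_left_edge_rectBoundary hab hbb)]

theorem rectIntegral_sub (hab : a ≤ a') (hbb : b ≤ b') {F G : ℂ → ℂ}
    (hF : ContinuousOn F (rectBoundary a a' b b')) (hG : ContinuousOn G (rectBoundary a a' b b')) :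
    rectIntegral a a' b b' (fun z => F z - G z) =
      rectIntegral a a' b b' F - rectIntegral a a' b b' G := by
  have hint {φ : ℂ → ℂ} (hφ : ContinuousOn φ (rectBoundary a a' b b')) {s t : ℝ} {e : ℝ → ℂ}
      (he : Continuous e) (hmaps : MapsTo e (uIcc s t) (rectBoundary a a' b b')) :
      IntervalIntegrable (fun x => φ (e x)) MeasureTheory.volume s t :=
    (hφ.comp he.continuousOn hmaps).intervalIntegrable
  have hbot := mapsTo_bottom_edge_rectBoundary hab hbb
  have htop := mapsTo_top_edge_rectBoundary hab hbb
  have hright := mapsTo_right_edge_rectBoundary hab hbb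
  have hleft := mapsTo_left_edge_rectBoundary hab hbb
  simp only [rectIntegral]
  rw [intervalIntegral.integral_sub (hint hF (by fun_prop) hbot) (hint hG (by fun_prop) hbot),
    intervalIntegral.integral_sub (hint hF (by fun_prop) htop) (hint hG (by fun_prop) htop),
    intervalIntegral.integral_sub (hint hF (by fun_prop) hright) (hint hG (by fun_prop) hright),
    intervalIntegral.integral_sub (hint hF (by fun_prop) hleft) (hint hG (by fun_prop) hleft)]
  ring

theorem rectIntegral_eq_zero_of_differentiableAt_off_countable (hab : a ≤ a') (hbb : b ≤ b')
    {F : ℂ → ℂ} {s : Set ℂ} (hs : s.Countable) (hc : ContinuousOn F (closedRect a a' b b'))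
    (hd : ∀ z ∈ (Ioo a a' ×ℂ Ioo b b') \ s, DifferentiableAt ℂ F z) :
    rectIntegral a a' b b' F = 0 := by
  have := Complex.integral_boundary_rect_eq_zero_of_differentiable_on_off_countable F
    (a + b * Complex.I) (a' + b' * Complex.I) s hs ?_ ?_
  · simpa [rectIntegral, add_sub_assoc, mul_sub] using this
  · simp only [Complex.add_re, Complex.add_im, Complex.ofReal_re, Complex.ofReal_im,
      Complex.mul_I_re, Complex.mul_I_im, neg_zero, zero_add, add_zero, uIcc_of_le hab,
      uIcc_of_le hbb]
    exact hc
  · simpa [hab, hbb] using hd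

theorem rectIntegral_eq_zero_of_tendsto_nhdsNE (hab : a ≤ a') (hbb : b ≤ b') {F : ℂ → ℂ}
    {B : Set ℂ} (hB : B.Countable) (hB_closed : IsClosed B)
    (hd : ∀ z ∈ closedRect a a' b b' \ B, DifferentiableAt ℂ F z)
    (hlim : ∀ c ∈ closedRect a a' b b' ∩ B, ∃ L, Tendsto F (𝓝[≠] c) (𝓝 L))
    (hγ : Disjoint (rectBoundary a a' b b') B) :
    rectIntegral a a' b b' F = 0 := by
  set G := extendFrom Bᶜ F
  have hGF : ∀ z ∈ closedRect a a' b b' \ B, G z = F z := fun z hz =>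
    extendFrom_eq (subset_closure hz.2) (hd z hz).continuousAt.continuousWithinAt
  have hG_cont : ContinuousOn G (closedRect a a' b b') := by
    refine continuousOn_extendFrom (fun z _ => (hB.dense_compl ℂ).closure_eq ▸ mem_univ z)
      fun z hz => ?_
    by_cases hzB : z ∈ B
    · obtain ⟨L, hL⟩ := hlim z ⟨hz, hzB⟩
      exact ⟨L, hL.mono_left (nhdsWithin_mono z fun w hw (hwz : w = z) => hw (hwz ▸ hzB))⟩
    · exact ⟨F z, (hd z ⟨hz, hzB⟩).continuousAt.continuousWithinAt⟩
  have hG_diff : ∀ z ∈ (Ioo a a' ×ℂ Ioo b b') \ B, DifferentiableAt ℂ G z := by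
    intro z hz
    have hopen : IsOpen ((Ioo a a' ×ℂ Ioo b b') \ B) :=
      (isOpen_Ioo.reProdIm isOpen_Ioo).sdiff hB_closed
    have hsub : (Ioo a a' ×ℂ Ioo b b') \ B ⊆ closedRect a a' b b' \ B :=
      fun w hw => ⟨⟨Ioo_subset_Icc_self hw.1.1, Ioo_subset_Icc_self hw.1.2⟩, hw.2⟩
    refine (hd z (hsub hz)).congr_of_eventuallyEq ?_
    filter_upwards [hopen.mem_nhds hz] with w hw using hGF w (hsub hw)
  rw [rectIntegral_congr hab hbb fun z hz =>
    (hGF z ⟨⟨hz.1, hz.2.1⟩, hγ.notMem_of_mem_left hz⟩).symm]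
  exact rectIntegral_eq_zero_of_differentiableAt_off_countable hab hbb hB hG_cont hG_diff

end Rectangle

theorem exists_tendsto_div_lamC_mul_sub {p : ℕ} (hp : p ≠ 0) {α : ℝ} {θ c : ℂ} {h : ℂ → ℂ}
    (hΛθ : LamC p α θ ≠ 0) (hh : AnalyticAt ℂ h c) (hc : LamC p α c * (c - θ) = 0)
    (hzero : h c = 0) (hderiv : LamC p α c = 0 → Complex.sin (p * c) = 0 → deriv h c = 0) :
    ∃ L, Tendsto (fun z => h z / (LamC p α z * (z - θ))) (𝓝[≠] c) (𝓝 L) := by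
  have hΛ : AnalyticAt ℂ (LamC p α) c := (differentiable_lamC p α).analyticAt c
  have hsub : AnalyticAt ℂ (· - θ) c := by fun_prop
  suffices ∃ n : ℕ, analyticOrderAt (fun z => LamC p α z * (z - θ)) c = n ∧
      ∀ i < n, iteratedDeriv i h c = 0 by
    obtain ⟨n, hn, hvanish⟩ := this
    exact exists_tendsto_div_of_analyticOrderAt_le hh (hΛ.mul hsub) (hn ▸ ENat.natCast_ne_top n)
      (hn ▸ (natCast_le_analyticOrderAt_iff_iteratedDeriv_eq_zero hh).mpr hvanish)
  rw [show (fun z => LamC p α z * (z - θ)) = LamC p α * (· - θ) from rfl,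
    analyticOrderAt_mul hΛ hsub]
  rcases eq_or_ne c θ with rfl | hcθ
  · refine ⟨1, ?_, by simpa using hzero⟩
    rw [analyticOrderAt_eq_zero.mpr (.inr hΛθ), analyticOrderAt_id_sub_const_self, zero_add,
      Nat.cast_one]
  have hΛc : LamC p α c = 0 := (mul_eq_zero.mp hc).resolve_right (sub_ne_zero.mpr hcθ)
  rw [analyticOrderAt_id_sub_const_of_ne hcθ, add_zero]
  by_cases hs : Complex.sin (p * c) = 0
  · refine ⟨2, analyticOrderAt_lamC_of_sin_eq_zero hp hΛc hs, fun i hi => ?_⟩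
    interval_cases i <;> simp [hzero, hderiv hΛc hs]
  · exact ⟨1, analyticOrderAt_lamC_of_sin_ne_zero hp hΛc hs, by simpa using hzero⟩

theorem interpolation_invariance_of_embedding_contour_integral_general
    (p : ℕ) (hp : 0 < p) (α : ℝ)
    (a a' bb bb' : ℝ) (hab : a < a') (hbb : bb < bb')
    (θ : ℂ)
    (hΛθ : LamC p α θ ≠ 0)
    (hγ : ∀ z ∈ rectBoundary a a' bb bb', LamC p α z ≠ 0 ∧ z ≠ θ)
    (f g : ℂ → ℂ) (U : Set ℂ) (hU : IsOpen U)
    (hRU : closedRect a a' bb bb' ⊆ U)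
    (hfd : DifferentiableOn ℂ f U) (hgd : DifferentiableOn ℂ g U)
    (hθval : f θ = g θ)
    (hval : ∀ χ ∈ closedRect a a' bb bb', LamC p α χ = 0 → f χ = g χ)
    (hder : ∀ χ ∈ closedRect a a' bb bb', LamC p α χ = 0 →
      Complex.sin ((p : ℂ) * χ) = 0 → deriv f χ = deriv g χ) :
    rectIntegral a a' bb bb' (fun z => f z / (LamC p α z * (z - θ)))
      = rectIntegral a a' bb bb' (fun z => g z / (LamC p α z * (z - θ))) := by
  set D : ℂ → ℂ := fun z => LamC p α z * (z - θ)
  have hD : Differentiable ℂ D := (differentiable_lamC p α).mul (differentiable_id.sub_const θ)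
  have hD_ne : ∀ z ∈ rectBoundary a a' bb bb', D z ≠ 0 := fun z hz =>
    mul_ne_zero (hγ z hz).1 (sub_ne_zero.mpr (hγ z hz).2)
  have hU_nhds {z : ℂ} (hz : z ∈ closedRect a a' bb bb') : U ∈ 𝓝 z := hU.mem_nhds (hRU hz)
  have hcont {φ : ℂ → ℂ} (hφ : DifferentiableOn ℂ φ U) :
      ContinuousOn (fun z => φ z / D z) (rectBoundary a a' bb bb') := fun z hz =>
    ((hφ.continuousOn.continuousAt (hU_nhds ⟨hz.1, hz.2.1⟩)).div hD.continuous.continuousAt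
      (hD_ne z hz)).continuousWithinAt
  have key : rectIntegral a a' bb bb' (fun z => (f z - g z) / D z) = 0 := by
    refine rectIntegral_eq_zero_of_tendsto_nhdsNE hab.le hbb.le
      (countable_setOf_lamC_mul_sub_eq_zero hp.ne' α θ)
      (isClosed_eq hD.continuous continuous_const) (fun z hz => ?_) (fun c hc => ?_)
      (disjoint_left.mpr hD_ne)
    · exact ((hfd.differentiableAt (hU_nhds hz.1)).sub
        (hgd.differentiableAt (hU_nhds hz.1))).div (hD z) hz.2
    · have hfc := hfd.differentiableAt (hU_nhds hc.1)
      have hgc := hgd.differentiableAt (hU_nhds hc.1)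
      refine exists_tendsto_div_lamC_mul_sub hp.ne' hΛθ ((hfd.sub hgd).analyticAt (hU_nhds hc.1))
        hc.2 ?_ fun hΛc hs => by rw [deriv_fun_sub hfc hgc, hder c hc.1 hΛc hs, sub_self]
      rcases mul_eq_zero.mp hc.2 with hΛc | hcθ
      · rw [hval c hc.1 hΛc, sub_self]
      · rw [sub_eq_zero.mp hcθ, hθval, sub_self]
  rw [← sub_eq_zero, ← rectIntegral_sub hab.le hbb.le (hcont hfd) (hcont hgd)]
  simpa [sub_div] using key

theorem interpolation_invariance_of_embedding_contour_integral
    (p : ℕ) (hp : 0 < p) (α : ℝ)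
    (a a' bb bb' : ℝ) (hab : a < a') (hbb : bb < bb')
    (θ : ℂ)
    (hθ : θ.re ∈ Set.Ioo a a' ∧ θ.im ∈ Set.Ioo bb bb')
    (hΛθ : LamC p α θ ≠ 0)
    (hγ : ∀ z ∈ rectBoundary a a' bb bb', LamC p α z ≠ 0 ∧ z ≠ θ)
    (f g : ℂ → ℂ) (U : Set ℂ) (hU : IsOpen U)
    (hRU : closedRect a a' bb bb' ⊆ U)
    (hfd : DifferentiableOn ℂ f U) (hgd : DifferentiableOn ℂ g U)
    (hθval : f θ = g θ)
    (hval : ∀ χ ∈ closedRect a a' bb bb', LamC p α χ = 0 → f χ = g χ)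
    (hder : ∀ χ ∈ closedRect a a' bb bb', LamC p α χ = 0 →
      Complex.sin ((p : ℂ) * χ) = 0 → deriv f χ = deriv g χ) :
    rectIntegral a a' bb bb' (fun z => f z / (LamC p α z * (z - θ)))
      = rectIntegral a a' bb bb' (fun z => g z / (LamC p α z * (z - θ))) :=
  interpolation_invariance_of_embedding_contour_integral_general p hp α a a' bb bb' hab hbb θ hΛθ hγ
    f g U hU hRU hfd hgd hθval hval hder
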